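/- arXiv:1904.02011 — 4 statements merged into one kernel-verified Lean document; each statement's English description precedes it below -/
import Mathlib

section
/- For a convex cyclic quadrilateral ABCD with diagonals AC and BD intersecting at P, the ratio PA/PC equals (AB·AD)/(CB·CD). -/
/-!
Since `P` lies strictly inside both chords, the vertical angles at `P` agree and the
intersecting chords theorem `PA · PC = PB · PD` makes the triangles `PAB ∼ PDC` and `PAD ∼ PBC`
similar (SAS). Hence `CD = (PC / PB) · AB` and `CB = (PC / PD) · AD`, and multiplying these and
using `PA · PC = PB · PD` once more gives `CB · CD = (PC / PA) · AB · AD`.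
-/

open EuclideanGeometry

namespace EuclideanGeometry

variable {V P : Type*} [NormedAddCommGroup V] [InnerProductSpace ℝ V] [MetricSpace P]
  [NormedAddTorsor V P]

theorem Sphere.eq_or_eq_of_wbtw {s : Sphere P} {p₁ p₂ p : P} (hp₁ : p₁ ∈ s) (hp₂ : p₂ ∈ s)
    (hp : p ∈ s) (h : Wbtw ℝ p₁ p p₂) : p = p₁ ∨ p = p₂ := by
  by_contra! hne
  have hlt := s.dist_center_lt_radius_of_sbtw hp₁ hp₂ ⟨h, hne.1, hne.2⟩
  exact hlt.ne (dist_comm p s.center ▸ mem_sphere.mp hp)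

theorem Sphere.sbtw_of_wbtw_of_wbtw {s : Sphere P} {a b c d p : P} (ha : a ∈ s) (hb : b ∈ s)
    (hc : c ∈ s) (hd : d ∈ s) (hab : a ≠ b) (had : a ≠ d) (hcb : c ≠ b) (hcd : c ≠ d)
    (hapc : Wbtw ℝ a p c) (hbpd : Wbtw ℝ b p d) : Sbtw ℝ a p c := by
  refine ⟨hapc, ?_, ?_⟩
  · rintro rfl
    exact (s.eq_or_eq_of_wbtw hb hd ha hbpd).elim hab had
  · rintro rfl
    exact (s.eq_or_eq_of_wbtw hb hd hc hbpd).elim hcb hcd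

theorem dist_eq_div_mul_dist_of_angle_eq_pi_of_mul_dist_eq {a b c d p : P}
    (hapc : ∠ a p c = Real.pi) (hbpd : ∠ b p d = Real.pi)
    (hmul : dist a p * dist c p = dist b p * dist d p) :
    dist d c = dist c p / dist b p * dist a b := by
  have hbp : dist b p ≠ 0 := left_dist_ne_zero_of_angle_eq_pi hbpd
  refine dist_mul_of_eq_angle_of_dist_mul a p b d p c _ ?_ ?_ ?_
  · rw [angle_comm, angle_eq_angle_of_angle_eq_pi_of_angle_eq_pi hapc hbpd]
  · field_simp
    linarith
  · field_simp

theorem dist_mul_dist_mul_dist_eq_of_cospherical_of_angle_eq_pi {a b c d p : P}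
    (h : Cospherical ({a, b, c, d} : Set P)) (hapc : ∠ a p c = Real.pi)
    (hbpd : ∠ b p d = Real.pi) :
    dist a p * (dist c b * dist c d) = dist a b * dist a d * dist c p := by
  have hmul : dist a p * dist c p = dist b p * dist d p :=
    mul_dist_eq_mul_dist_of_cospherical_of_angle_eq_pi (Set.insert_comm b c {d} ▸ h) hapc hbpd
  have hdc := dist_eq_div_mul_dist_of_angle_eq_pi_of_mul_dist_eq hapc hbpd hmul
  have hbc := dist_eq_div_mul_dist_of_angle_eq_pi_of_mul_dist_eq hapc
    (angle_comm b p d ▸ hbpd) (by rw [hmul, mul_comm])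
  have hbp : dist b p ≠ 0 := left_dist_ne_zero_of_angle_eq_pi hbpd
  have hdp : dist d p ≠ 0 := right_dist_ne_zero_of_angle_eq_pi hbpd
  rw [dist_comm c b, hbc, dist_comm c d, hdc]
  field_simp
  linear_combination dist c p * dist a b * dist a d * hmul

end EuclideanGeometry

/-- For a convex cyclic quadrilateral `ABCD` (the diagonals of a convex quadrilateral
intersect, at `P`), the ratio `PA/PC` equals `(AB·AD)/(CB·CD)`. -/
theorem dist_div_dist_eq_of_cyclic_quadrilateral
    (A B C D P O : EuclideanSpace ℝ (Fin 2)) (r : ℝ)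
    (hA : A ∈ Metric.sphere O r) (hB : B ∈ Metric.sphere O r)
    (hC : C ∈ Metric.sphere O r) (hD : D ∈ Metric.sphere O r)
    (hne : Function.Injective ![A, B, C, D])
    (hP1 : P ∈ segment ℝ A C) (hP2 : P ∈ segment ℝ B D) :
    dist P A / dist P C = (dist A B * dist A D) / (dist C B * dist C D) := by
  let s : Sphere (EuclideanSpace ℝ (Fin 2)) := ⟨O, r⟩
  have hAB : A ≠ B := by simpa using hne.ne (show (0 : Fin 4) ≠ 1 by decide)
  have hAD : A ≠ D := by simpa using hne.ne (show (0 : Fin 4) ≠ 3 by decide)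
  have hCB : C ≠ B := by simpa using hne.ne (show (2 : Fin 4) ≠ 1 by decide)
  have hCD : C ≠ D := by simpa using hne.ne (show (2 : Fin 4) ≠ 3 by decide)
  have hAPC : Sbtw ℝ A P C := s.sbtw_of_wbtw_of_wbtw hA hB hC hD hAB hAD hCB hCD
    (mem_segment_iff_wbtw.mp hP1) (mem_segment_iff_wbtw.mp hP2)
  have hBPD : Sbtw ℝ B P D := s.sbtw_of_wbtw_of_wbtw hB hA hD hC hAB.symm hCB.symm
    hAD.symm hCD.symm (mem_segment_iff_wbtw.mp hP2) (mem_segment_iff_wbtw.mp hP1)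
  have hcyclic : Cospherical ({A, B, C, D} : Set (EuclideanSpace ℝ (Fin 2))) :=
    ⟨O, r, by rintro X (rfl | rfl | rfl | rfl) <;> assumption⟩
  rw [dist_comm P A, dist_comm P C, div_eq_div_iff (dist_ne_zero.mpr hAPC.right_ne) ?_]
  · exact dist_mul_dist_mul_dist_eq_of_cospherical_of_angle_eq_pi hcyclic
      (angle_eq_pi_iff_sbtw.mpr hAPC) (angle_eq_pi_iff_sbtw.mpr hBPD)
  · exact mul_ne_zero (dist_ne_zero.mpr hCB) (dist_ne_zero.mpr hCD)
end

section
/- Let ABC be a triangle inscribed in a circle ω, let P be an interior point with homogeneous barycentric coordinates (x : y : z), let E and F be the traces of P on CA and AB respectively (so E = (x:0:z), F = (x:y:0)), and let Q be an intersection of line EF with ω. Then CA/(y·QB) = BC/(x·QA) + AB/(z·QC), provided the signs are arranged so that Q lies on ray EF beyond the appropriate side. -/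
/-!
Write `Q = αA + βB + γC` in barycentric coordinates. Lagrange's identity for the squared
distance from a point to `Q`, taken at the circumcentre, gives the circle equation
`a²βγ + b²γα + c²αβ = 0`; taken at the vertices it then gives `QA² = βc² + γb²`,
`QB² = αc² + γa²`, `QC² = αb² + βa²`. Consequently `QA·QC = acβ`, `QB·QC = bcα` and
`QA·QB = -abγ`, the signs holding because `Q` lies on the arc `AB` not containing `C`
(`α, β > 0 > γ`). Clearing denominators, the identity becomes `yzα = xzβ + xyγ`, which is the
equation of the line `EF`.
-/

open EuclideanGeometry Affine RealInnerProductSpace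

theorem lineMap_lineMap_vsub {k V P : Type*} [CommRing k] [AddCommGroup V] [Module k V]
    [AddTorsor V P] (A B C : P) (μ ν t : k) :
    AffineMap.lineMap (AffineMap.lineMap A C μ) (AffineMap.lineMap A B ν) t -ᵥ A
      = (t * ν) • (B -ᵥ A) + ((1 - t) * μ) • (C -ᵥ A) := by
  simp only [AffineMap.lineMap_apply, vadd_vsub_assoc, vsub_vadd_eq_vsub_sub, vsub_self]
  module

section Euclidean

variable {V P : Type*} [NormedAddCommGroup V] [InnerProductSpace ℝ V] [MetricSpace P]
  [NormedAddTorsor V P]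

-- Lagrange's identity for the point `Q = (1 - β - γ) A + β B + γ C`.
theorem dist_sq_eq_of_vsub_eq_smul_add_smul {A B C Q : P} {β γ : ℝ}
    (hQ : Q -ᵥ A = β • (B -ᵥ A) + γ • (C -ᵥ A)) (X : P) :
    dist X Q ^ 2 = (1 - β - γ) * dist X A ^ 2 + β * dist X B ^ 2 + γ * dist X C ^ 2
      - (dist B C ^ 2 * β * γ + dist C A ^ 2 * γ * (1 - β - γ)
        + dist A B ^ 2 * (1 - β - γ) * β) := by
  set u := B -ᵥ A
  set v := C -ᵥ A
  set g := X -ᵥ A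
  have hXQ : dist X Q = ‖g - (β • u + γ • v)‖ := by
    rw [dist_eq_norm_vsub V, ← hQ, vsub_sub_vsub_cancel_right]
  have hXB : dist X B = ‖g - u‖ := by rw [dist_eq_norm_vsub V, vsub_sub_vsub_cancel_right]
  have hXC : dist X C = ‖g - v‖ := by rw [dist_eq_norm_vsub V, vsub_sub_vsub_cancel_right]
  have hBC : dist B C = ‖u - v‖ := by rw [dist_eq_norm_vsub V, vsub_sub_vsub_cancel_right]
  have hCA : dist C A = ‖v‖ := dist_eq_norm_vsub V C A
  have hAB : dist A B = ‖u‖ := dist_eq_norm_vsub' V A B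
  have hXA : dist X A = ‖g‖ := dist_eq_norm_vsub V X A
  rw [hXQ, hXA, hXB, hXC, hBC, hCA, hAB]
  simp only [norm_sub_sq_real, norm_add_sq_real, inner_add_right, real_inner_smul_left,
    real_inner_smul_right, norm_smul, mul_pow, Real.norm_eq_abs, sq_abs]
  ring

theorem circumconic_eq_zero_of_mem_sphere {A B C Q O : P} {r β γ : ℝ}
    (hQ : Q -ᵥ A = β • (B -ᵥ A) + γ • (C -ᵥ A)) (hA : A ∈ Metric.sphere O r)
    (hB : B ∈ Metric.sphere O r) (hC : C ∈ Metric.sphere O r) (hQO : Q ∈ Metric.sphere O r) :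
    dist B C ^ 2 * β * γ + dist C A ^ 2 * γ * (1 - β - γ) + dist A B ^ 2 * (1 - β - γ) * β
      = 0 := by
  have h := dist_sq_eq_of_vsub_eq_smul_add_smul hQ O
  rw [Metric.mem_sphere'] at hA hB hC hQO
  rw [hA, hB, hC, hQO] at h
  linear_combination h

theorem dist_sq_eq_of_mem_sphere {A B C Q O : P} {r β γ : ℝ}
    (hQ : Q -ᵥ A = β • (B -ᵥ A) + γ • (C -ᵥ A)) (hA : A ∈ Metric.sphere O r)
    (hB : B ∈ Metric.sphere O r) (hC : C ∈ Metric.sphere O r) (hQO : Q ∈ Metric.sphere O r) :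
    dist Q A ^ 2 = β * dist A B ^ 2 + γ * dist C A ^ 2 ∧
      dist Q B ^ 2 = (1 - β - γ) * dist A B ^ 2 + γ * dist B C ^ 2 ∧
      dist Q C ^ 2 = (1 - β - γ) * dist C A ^ 2 + β * dist B C ^ 2 := by
  have h0 := circumconic_eq_zero_of_mem_sphere hQ hA hB hC hQO
  have hA' := dist_sq_eq_of_vsub_eq_smul_add_smul hQ A
  have hB' := dist_sq_eq_of_vsub_eq_smul_add_smul hQ B
  have hC' := dist_sq_eq_of_vsub_eq_smul_add_smul hQ C
  simp only [dist_self, dist_comm _ Q, dist_comm B A, dist_comm C B, dist_comm A C] at hA' hB' hC'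
  exact ⟨by linear_combination hA' - h0, by linear_combination hB' - h0,
    by linear_combination hC' - h0⟩

end Euclidean

section Barycentric

variable {a b c α β γ : ℝ}

theorem circumconic_pos (hb : 0 < b) (hc : 0 < c) (hα : 0 < α) (hβ : 0 ≤ β)
    (hγ : 0 ≤ γ) (hβγ : 0 < β ∨ 0 < γ) : 0 < a ^ 2 * β * γ + b ^ 2 * γ * α + c ^ 2 * α * β := by
  have := mul_nonneg (mul_nonneg (sq_nonneg a) hβ) hγ
  rcases hβγ with hβ | hγ
  · have := mul_pos (mul_pos (pow_pos hc 2) hα) hβ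
    have := mul_nonneg (mul_nonneg (sq_nonneg b) hγ) hα.le
    linarith
  · have := mul_pos (mul_pos (pow_pos hb 2) hγ) hα
    have := mul_nonneg (mul_nonneg (sq_nonneg c) hα.le) hβ
    linarith

-- With `β = tν`, `γ = (1 - t)μ` parametrising the line `EF`, the closed segment `EF`
-- (`0 ≤ t ≤ 1`) lies strictly inside the circle.
theorem one_lt_of_circumconic_eq_zero {μ ν t : ℝ} (hb : 0 < b) (hc : 0 < c)
    (hμ₀ : 0 < μ) (hμ₁ : μ < 1) (hν₀ : 0 < ν) (hν₁ : ν < 1) (ht : 0 ≤ t)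
    (h : a ^ 2 * (t * ν) * ((1 - t) * μ) + b ^ 2 * ((1 - t) * μ) * (1 - t * ν - (1 - t) * μ)
      + c ^ 2 * (1 - t * ν - (1 - t) * μ) * (t * ν) = 0) : 1 < t := by
  by_contra! ht₁
  have hβ : 0 ≤ t * ν := by positivity
  have hγ : 0 ≤ (1 - t) * μ := mul_nonneg (by linarith) hμ₀.le
  have hα : 0 < 1 - t * ν - (1 - t) * μ := by
    nlinarith [mul_nonneg ht (sub_nonneg.2 hν₁.le),
      mul_nonneg (sub_nonneg.2 ht₁) (sub_pos.2 hμ₁).le]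
  have hβγ : 0 < t * ν ∨ 0 < (1 - t) * μ := by
    rcases ht₁.lt_or_eq with ht₁ | rfl
    · exact Or.inr (mul_pos (by linarith) hμ₀)
    · exact Or.inl (by linarith)
  exact (circumconic_pos hb hc hα hβ hγ hβγ).ne' h

variable {p q s : ℝ}

theorem pos_of_circumconic_eq_zero (ha : 0 < a) (hβ : 0 < β) (hγ : γ < 0)
    (hp : p ^ 2 = β * c ^ 2 + γ * b ^ 2) (h : a ^ 2 * β * γ + b ^ 2 * γ * α + c ^ 2 * α * β = 0) :
    0 < α := by
  have hαp : α * p ^ 2 = a ^ 2 * β * -γ := by linear_combination α * hp + h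
  have : 0 < α * p ^ 2 := hαp ▸ mul_pos (mul_pos (by positivity) hβ) (neg_pos.2 hγ)
  exact pos_of_mul_pos_left this (sq_nonneg p)

theorem mul_eq_of_circumconic_eq_zero (ha : 0 < a) (hb : 0 < b) (hc : 0 < c) (hβ : 0 < β)
    (hγ : γ < 0) (hp₀ : 0 ≤ p) (hq₀ : 0 ≤ q) (hs₀ : 0 ≤ s)
    (hp : p ^ 2 = β * c ^ 2 + γ * b ^ 2) (hq : q ^ 2 = α * c ^ 2 + γ * a ^ 2)
    (hs : s ^ 2 = α * b ^ 2 + β * a ^ 2) (h : a ^ 2 * β * γ + b ^ 2 * γ * α + c ^ 2 * α * β = 0) :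
    p * s = a * c * β ∧ q * s = b * c * α ∧ p * q = a * b * -γ := by
  have hα := pos_of_circumconic_eq_zero ha hβ hγ hp h
  refine ⟨(sq_eq_sq₀ (by positivity) (by positivity)).1 ?_,
    (sq_eq_sq₀ (by positivity) (by positivity)).1 ?_,
    (sq_eq_sq₀ (by positivity) (mul_nonneg (by positivity) (neg_nonneg.2 hγ.le))).1 ?_⟩
  · linear_combination s ^ 2 * hp + (β * c ^ 2 + γ * b ^ 2) * hs + b ^ 2 * h
  · linear_combination s ^ 2 * hq + (α * c ^ 2 + γ * a ^ 2) * hs + a ^ 2 * h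
  · linear_combination q ^ 2 * hp + (β * c ^ 2 + γ * b ^ 2) * hq + c ^ 2 * h

theorem div_eq_div_add_div_of_barycentric {x y z : ℝ} (ha : 0 < a) (hb : 0 < b) (hc : 0 < c)
    (hx : 0 < x) (hy : 0 < y) (hz : 0 < z) (hα : 0 < α) (hβ : 0 < β)
    (hps : p * s = a * c * β) (hqs : q * s = b * c * α) (hpq : p * q = a * b * -γ)
    (hline : y * z * α = x * z * β + x * y * γ) :
    b / (y * q) = a / (x * p) + c / (z * s) := by
  have hps₀ : p * s ≠ 0 := hps ▸ (by positivity)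
  have hqs₀ : q * s ≠ 0 := hqs ▸ (by positivity)
  have hp : p ≠ 0 := left_ne_zero_of_mul hps₀
  have hq : q ≠ 0 := left_ne_zero_of_mul hqs₀
  have hs : s ≠ 0 := right_ne_zero_of_mul hps₀
  field_simp
  linear_combination b * x * z * hps - a * y * z * hqs - c * x * y * hpq - a * b * c * hline

end Barycentric

/-- Let `ABC` be a triangle inscribed in a circle `ω`, let `P` be an interior point with
homogeneous barycentric coordinates `(x : y : z)` (`x, y, z > 0`), with traces
`E = (x : 0 : z)` on `CA` and `F = (x : y : 0)` on `AB`, and let `Q` be the intersection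
of ray `EF` with `ω`.  Then `CA/(y·QB) = BC/(x·QA) + AB/(z·QC)`. -/
theorem barycentric_trace_circle_identity
    (A B C Q O : EuclideanSpace ℝ (Fin 2)) (r : ℝ) (x y z : ℝ)
    (hx : 0 < x) (hy : 0 < y) (hz : 0 < z)
    (hABC : AffineIndependent ℝ ![A, B, C])
    (hA : A ∈ Metric.sphere O r) (hB : B ∈ Metric.sphere O r)
    (hC : C ∈ Metric.sphere O r) (hQ : Q ∈ Metric.sphere O r)
    -- `E` is the trace of `P` on `CA` and `F` the trace on `AB`
    (E : EuclideanSpace ℝ (Fin 2)) (hE : E = AffineMap.lineMap A C (z / (x + z)))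
    (F : EuclideanSpace ℝ (Fin 2)) (hF : F = AffineMap.lineMap A B (y / (x + y)))
    -- `Q` lies on the ray from `E` through `F`
    (hray : ∃ t : ℝ, 0 ≤ t ∧ Q = AffineMap.lineMap E F t) :
    dist C A / (y * dist Q B) = dist B C / (x * dist Q A) + dist A B / (z * dist Q C) := by
  obtain ⟨t, ht, rfl⟩ := hray
  subst hE hF
  set μ := z / (x + z) with hμ
  set ν := y / (x + y) with hν
  have hμ₀ : 0 < μ := by positivity
  have hν₀ : 0 < ν := by positivity
  have hμ₁ : μ < 1 := (div_lt_one (by positivity)).2 (by linarith)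
  have hν₁ : ν < 1 := (div_lt_one (by positivity)).2 (by linarith)
  have hcol := affineIndependent_iff_not_collinear_set.1 hABC
  have ha : 0 < dist B C := dist_pos.2 (ne₂₃_of_not_collinear hcol)
  have hb : 0 < dist C A := dist_pos.2 (ne₁₃_of_not_collinear hcol).symm
  have hc : 0 < dist A B := dist_pos.2 (ne₁₂_of_not_collinear hcol)
  have hvsub := lineMap_lineMap_vsub A B C μ ν t
  have hconic := circumconic_eq_zero_of_mem_sphere hvsub hA hB hC hQ
  have ht₁ := one_lt_of_circumconic_eq_zero hb hc hμ₀ hμ₁ hν₀ hν₁ ht hconic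
  have hβ : 0 < t * ν := by positivity
  have hγ : (1 - t) * μ < 0 := mul_neg_of_neg_of_pos (by linarith) hμ₀
  obtain ⟨hp, hq, hs⟩ := dist_sq_eq_of_mem_sphere hvsub hA hB hC hQ
  obtain ⟨hps, hqs, hpq⟩ := mul_eq_of_circumconic_eq_zero ha hb hc hβ hγ dist_nonneg
    dist_nonneg dist_nonneg hp hq hs hconic
  have hline : y * z * (1 - t * ν - (1 - t) * μ) = x * z * (t * ν) + x * y * ((1 - t) * μ) := by
    rw [hμ, hν]
    field_simp
    ring
  exact div_eq_div_add_div_of_barycentric ha hb hc hx hy hz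
    (pos_of_circumconic_eq_zero ha hβ hγ hp hconic) hβ hps hqs hpq hline
end

section
/- Let ABC be a triangle inscribed in circle ω, let P and S be points of ω with PS parallel to BC, and let the line PS meet lines AB and AC at Q and R respectively. Then (QS/RS)·(RA/QA) = SB/SC. -/
/-!
The line through `S` parallel to `BC` meets `AB`, `AC` at `Q = A + t(B - A)` and
`R = A + t(C - A)` (Thales), so `RA / QA = AC / AB`. Writing `S - A = x(B - A) + y(C - A)` gives
`QS = |y|·BC` and `RS = |x|·BC`, and the claim becomes `|y|·AC·SC = |x|·AB·SB`. With
`u = B - A`, `v = C - A`, the concyclicity of `A, B, C, S` reads `‖xu + yv‖² = x‖u‖² + y‖v‖²`,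
and the squared claim is a polynomial identity modulo this relation.
-/

open EuclideanGeometry Affine RealInnerProductSpace

section Thales

variable {k V P : Type*} [Field k] [AddCommGroup V] [Module k V] [AddTorsor V P]

theorem exists_vsub_eq_smul_of_mem_affineSpan_pair {A B Q : P} (hQ : Q ∈ line[k, A, B]) :
    ∃ t : k, Q -ᵥ A = t • (B -ᵥ A) := by
  rw [← vsub_vadd Q A, vadd_left_mem_affineSpan_pair] at hQ
  obtain ⟨t, ht⟩ := hQ
  exact ⟨t, ht.symm⟩

theorem linearIndependent_vsub_of_affineIndependent {A B C : P}
    (h : AffineIndependent k ![A, B, C]) : LinearIndependent k ![B -ᵥ A, C -ᵥ A] := by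
  have hinj : Function.Injective
      (![⟨1, by decide⟩, ⟨2, by decide⟩] : Fin 2 → {i : Fin 3 // i ≠ 0}) := by decide
  have h₂ := ((affineIndependent_iff_linearIndependent_vsub k _ 0).mp h).comp _ hinj
  rwa [show (_ ∘ _) = ![B -ᵥ A, C -ᵥ A] by ext i; fin_cases i <;> rfl] at h₂

theorem exists_vsub_eq_smul_of_vsub_mem_span {A B C Q R : P}
    (hABC : LinearIndependent k ![B -ᵥ A, C -ᵥ A]) (hQ : Q ∈ line[k, A, B])
    (hR : R ∈ line[k, A, C]) (hQR : Q -ᵥ R ∈ k ∙ (C -ᵥ B)) :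
    ∃ t : k, Q -ᵥ A = t • (B -ᵥ A) ∧ R -ᵥ A = t • (C -ᵥ A) := by
  obtain ⟨q, hq⟩ := exists_vsub_eq_smul_of_mem_affineSpan_pair hQ
  obtain ⟨r, hr⟩ := exists_vsub_eq_smul_of_mem_affineSpan_pair hR
  obtain ⟨s, hs⟩ := Submodule.mem_span_singleton.mp hQR
  have hdecomp : (q + s) • (B -ᵥ A) + (-r - s) • (C -ᵥ A) = 0 := by
    have : Q -ᵥ R = (Q -ᵥ A) - (R -ᵥ A) := (vsub_sub_vsub_cancel_right Q R A).symm
    rw [← hs, hq, hr, ← vsub_sub_vsub_cancel_right C B A] at this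
    linear_combination (norm := module) -this
  obtain ⟨hqs, hrs⟩ := LinearIndependent.pair_iff.mp hABC _ _ hdecomp
  exact ⟨q, hq, by rw [hr, show r = q by linear_combination -hrs - hqs]⟩

end Thales

section Circle

variable {V P : Type*} [NormedAddCommGroup V] [InnerProductSpace ℝ V] [MetricSpace P]
  [NormedAddTorsor V P]

theorem norm_smul_add_smul_sq (u v : V) (a b : ℝ) :
    ‖a • u + b • v‖ ^ 2 = a ^ 2 * ‖u‖ ^ 2 + 2 * a * b * ⟪u, v⟫ + b ^ 2 * ‖v‖ ^ 2 := by
  rw [norm_add_sq_real, norm_smul, norm_smul, real_inner_smul_left, real_inner_smul_right,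
    Real.norm_eq_abs, Real.norm_eq_abs, mul_pow, mul_pow, sq_abs, sq_abs]
  ring

theorem norm_vsub_sq_eq_of_mem_sphere {O X A : P} {r : ℝ} (hX : X ∈ Metric.sphere O r)
    (hA : A ∈ Metric.sphere O r) : ‖X -ᵥ A‖ ^ 2 = -2 * ⟪X -ᵥ A, A -ᵥ O⟫ := by
  have h : ‖(X -ᵥ A) + (A -ᵥ O)‖ ^ 2 = ‖A -ᵥ O‖ ^ 2 := by
    rw [vsub_add_vsub_cancel, ← dist_eq_norm_vsub, ← dist_eq_norm_vsub, Metric.mem_sphere.mp hX,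
      Metric.mem_sphere.mp hA]
  rw [norm_add_sq_real] at h
  linarith

theorem abs_mul_dist_mul_dist_eq_of_mem_sphere {O A B C S : P} {r x y : ℝ}
    (hA : A ∈ Metric.sphere O r) (hB : B ∈ Metric.sphere O r) (hC : C ∈ Metric.sphere O r)
    (hS : S ∈ Metric.sphere O r) (hSA : S -ᵥ A = x • (B -ᵥ A) + y • (C -ᵥ A)) :
    |y| * dist A C * dist S C = |x| * dist A B * dist S B := by
  rw [dist_comm A B, dist_comm A C, dist_eq_norm_vsub V, dist_eq_norm_vsub V, dist_eq_norm_vsub V,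
    dist_eq_norm_vsub V]
  set u := B -ᵥ A
  set v := C -ᵥ A
  have hcircle : ‖x • u + y • v‖ ^ 2 = x * ‖u‖ ^ 2 + y * ‖v‖ ^ 2 := by
    rw [← hSA, norm_vsub_sq_eq_of_mem_sphere hS hA, norm_vsub_sq_eq_of_mem_sphere hB hA,
      norm_vsub_sq_eq_of_mem_sphere hC hA, hSA, inner_add_left, real_inner_smul_left,
      real_inner_smul_left]
    ring
  have hSB : S -ᵥ B = (x - 1) • u + y • v := by
    rw [← vsub_sub_vsub_cancel_right S B A, hSA]; module
  have hSC : S -ᵥ C = x • u + (y - 1) • v := by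
    rw [← vsub_sub_vsub_cancel_right S C A, hSA]; module
  rw [norm_smul_add_smul_sq] at hcircle
  refine (pow_left_inj₀ (by positivity) (by positivity) two_ne_zero).mp ?_
  rw [hSB, hSC, mul_pow, mul_pow, mul_pow, mul_pow, sq_abs, sq_abs,
    norm_smul_add_smul_sq, norm_smul_add_smul_sq]
  linear_combination (x * (1 - x) * ‖u‖ ^ 2 - y * (1 - y) * ‖v‖ ^ 2) * hcircle

end Circle

theorem dist_eq_abs_mul_dist_of_vsub_eq_smul {V P : Type*} [NormedAddCommGroup V]
    [NormedSpace ℝ V] [MetricSpace P] [NormedAddTorsor V P] {p q a b : P} {t : ℝ}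
    (h : p -ᵥ q = t • (a -ᵥ b)) : dist p q = |t| * dist a b := by
  rw [dist_eq_norm_vsub V, h, norm_smul, Real.norm_eq_abs, dist_eq_norm_vsub V]

theorem ratio_product_eq_of_parallel_chord_general
    (A B C P S Q R O : EuclideanSpace ℝ (Fin 2)) (r : ℝ)
    (hABC : AffineIndependent ℝ ![A, B, C])
    (hA : A ∈ Metric.sphere O r) (hB : B ∈ Metric.sphere O r)
    (hC : C ∈ Metric.sphere O r)
    (hS : S ∈ Metric.sphere O r)
    (hSC : S ≠ C)
    (hpar : line[ℝ, P, S] ∥ line[ℝ, B, C])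
    (hQ1 : Q ∈ line[ℝ, P, S]) (hQ2 : Q ∈ line[ℝ, A, B])
    (hR1 : R ∈ line[ℝ, P, S]) (hR2 : R ∈ line[ℝ, A, C])
    (hQA : Q ≠ A) (hRS : R ≠ S) :
    (dist Q S / dist R S) * (dist R A / dist Q A) = dist S B / dist S C := by
  have hdir {X Y} (hX : X ∈ line[ℝ, P, S]) (hY : Y ∈ line[ℝ, P, S]) : X -ᵥ Y ∈ ℝ ∙ (C -ᵥ B) := by
    rw [← vectorSpan_pair_rev, ← direction_affineSpan, ← hpar.direction_eq]
    exact AffineSubspace.vsub_mem_direction hX hY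
  obtain ⟨t, hQv, hRv⟩ := exists_vsub_eq_smul_of_vsub_mem_span
    (linearIndependent_vsub_of_affineIndependent hABC) hQ2 hR2 (hdir hQ1 hR1)
  obtain ⟨y, hSQv⟩ := Submodule.mem_span_singleton.mp
    (hdir (right_mem_affineSpan_pair ℝ P S) hQ1)
  have hSAv : S -ᵥ A = (t - y) • (B -ᵥ A) + y • (C -ᵥ A) := by
    rw [← vsub_add_vsub_cancel S Q A, ← hSQv, hQv, ← vsub_sub_vsub_cancel_right C B A]; module
  have hRSv : R -ᵥ S = (t - y) • (C -ᵥ B) := by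
    rw [← vsub_sub_vsub_cancel_right R S A, hRv, hSAv, ← vsub_sub_vsub_cancel_right C B A]; module
  have hty : t - y ≠ 0 := by
    intro h
    rw [h, zero_smul, vsub_eq_zero_iff_eq] at hRSv
    exact hRS hRSv
  have ht : t ≠ 0 := by
    rintro rfl
    rw [zero_smul, vsub_eq_zero_iff_eq] at hQv
    exact hQA hQv
  have hBC : dist C B ≠ 0 := dist_ne_zero.mpr (hABC.injective.ne (by decide : (2 : Fin 3) ≠ 1))
  have hAB : dist A B ≠ 0 := dist_ne_zero.mpr (hABC.injective.ne (by decide : (0 : Fin 3) ≠ 1))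
  have hSC' : dist S C ≠ 0 := dist_ne_zero.mpr hSC
  rw [dist_comm Q S, dist_eq_abs_mul_dist_of_vsub_eq_smul hSQv.symm,
    dist_eq_abs_mul_dist_of_vsub_eq_smul hRSv, dist_eq_abs_mul_dist_of_vsub_eq_smul hQv,
    dist_eq_abs_mul_dist_of_vsub_eq_smul hRv, dist_comm B A, dist_comm C A]
  have key := abs_mul_dist_mul_dist_eq_of_mem_sphere hA hB hC hS hSAv
  field_simp
  linear_combination key

/-- Let `ABC` be inscribed in a circle, `P`, `S` points of the circle with `PS ∥ BC`,
and let line `PS` meet lines `AB`, `AC` at `Q`, `R` respectively. Then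
`(QS/RS)·(RA/QA) = SB/SC`. -/
theorem ratio_product_eq_of_parallel_chord
    (A B C P S Q R O : EuclideanSpace ℝ (Fin 2)) (r : ℝ)
    (hABC : AffineIndependent ℝ ![A, B, C])
    (hA : A ∈ Metric.sphere O r) (hB : B ∈ Metric.sphere O r)
    (hC : C ∈ Metric.sphere O r) (hP : P ∈ Metric.sphere O r)
    (hS : S ∈ Metric.sphere O r) (hPS : P ≠ S)
    (hPB : P ≠ B) (hPC : P ≠ C) (hSB : S ≠ B) (hSC : S ≠ C)
    (hpar : line[ℝ, P, S] ∥ line[ℝ, B, C])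
    (hQ1 : Q ∈ line[ℝ, P, S]) (hQ2 : Q ∈ line[ℝ, A, B])
    (hR1 : R ∈ line[ℝ, P, S]) (hR2 : R ∈ line[ℝ, A, C])
    (hQA : Q ≠ A) (hRS : R ≠ S) :
    (dist Q S / dist R S) * (dist R A / dist Q A) = dist S B / dist S C :=
  ratio_product_eq_of_parallel_chord_general A B C P S Q R O r hABC hA hB hC hS hSC hpar hQ1 hQ2 hR1
    hR2 hQA hRS
end

section
/- Let ABC be a triangle inscribed in circle ω, P a point on ω on the arc AB not containing C (so that A, P, B, C are in cyclic order appropriately), and suppose the identity 1/(CA·PB) = 1/(BC·PA) + 1/(AB·PC) holds together with Ptolemy's relation BC·PA = AB·PC - CA·PB. Then (BC·PA)/(CA·PB) = (1+√5)/2. -/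
/-!
With `x = BC·PA`, `y = CA·PB`, Ptolemy's relation makes `AB·PC = x + y`; substituting this into
`1/y = 1/x + 1/(x + y)` gives `x² = xy + y²`, so `x/y` is the positive root of `t² = t + 1`.
-/

open Real goldenRatio

theorem Real.eq_goldenRatio_of_sq_eq_add_one {t : ℝ} (ht : 0 ≤ t) (h : t ^ 2 = t + 1) :
    t = φ := by
  have hfactor : (t - φ) * (t - ψ) = 0 := by
    linear_combination h - t * goldenRatio_add_goldenConj + goldenRatio_mul_goldenConj
  have hψ : t - ψ ≠ 0 := by linarith [goldenConj_neg]
  exact sub_eq_zero.mp ((mul_eq_zero.mp hfactor).resolve_right hψ)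

theorem div_sq_eq_div_add_one_of_one_div_eq {K : Type*} [Field K] {x y : K}
    (hx : x ≠ 0) (hy : y ≠ 0) (hxy : x + y ≠ 0) (h : 1 / y = 1 / x + 1 / (x + y)) :
    (x / y) ^ 2 = x / y + 1 := by
  field_simp at h ⊢
  linear_combination h

theorem golden_of_ptolemy_and_inv_rel_general (BC CA AB PA PB PC : ℝ)
    (hBC : 0 < BC) (hCA : 0 < CA)
    (hPA : 0 < PA) (hPB : 0 < PB)
    (h1 : 1 / (CA * PB) = 1 / (BC * PA) + 1 / (AB * PC))
    (h2 : BC * PA = AB * PC - CA * PB) :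
    (BC * PA) / (CA * PB) = (1 + Real.sqrt 5) / 2 := by
  have hx : 0 < BC * PA := mul_pos hBC hPA
  have hy : 0 < CA * PB := mul_pos hCA hPB
  rw [show AB * PC = BC * PA + CA * PB by linarith] at h1
  exact eq_goldenRatio_of_sq_eq_add_one (by positivity)
    (div_sq_eq_div_add_one_of_one_div_eq hx.ne' hy.ne' (by positivity) h1)

/-- If positive reals `BC, CA, AB, PA, PB, PC` satisfy
`1/(CA·PB) = 1/(BC·PA) + 1/(AB·PC)` and Ptolemy's relation
`BC·PA = AB·PC - CA·PB`, then `(BC·PA)/(CA·PB)` is the golden ratio. -/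
theorem golden_of_ptolemy_and_inv_rel (BC CA AB PA PB PC : ℝ)
    (hBC : 0 < BC) (hCA : 0 < CA) (hAB : 0 < AB)
    (hPA : 0 < PA) (hPB : 0 < PB) (hPC : 0 < PC)
    (h1 : 1 / (CA * PB) = 1 / (BC * PA) + 1 / (AB * PC))
    (h2 : BC * PA = AB * PC - CA * PB) :
    (BC * PA) / (CA * PB) = (1 + Real.sqrt 5) / 2 :=
  golden_of_ptolemy_and_inv_rel_general BC CA AB PA PB PC hBC hCA hPA hPB h1 h2
end
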